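/- Let G be a finite group with a normal Sylow 2-subgroup S such that every real element of S lies in the center of S. Then the prime graph on the real class sizes of G is connected. -/

import Mathlib

/-- An element `x` of a group is *real* if it is conjugate to its inverse. -/
def IsRealEl (G : Type*) [Group G] (x : G) : Prop := ∃ g : G, g⁻¹ * x * g = x⁻¹

/-- The size of the conjugacy class of `x` in `G`. -/
noncomputable def clSize (G : Type*) [Group G] (x : G) : ℕ := Nat.card {y : G // IsConj x y}

/-- Vertices of the prime graph on real class sizes. -/
def realVerts (G : Type*) [Group G] : Set ℕ :=
  {p | p.Prime ∧ ∃ x : G, IsRealEl G x ∧ p ∣ clSize G x}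

/-- Adjacency in the prime graph on real class sizes. -/
def realAdj (G : Type*) [Group G] (p q : ℕ) : Prop :=
  p.Prime ∧ q.Prime ∧ p ≠ q ∧ ∃ x : G, IsRealEl G x ∧ p * q ∣ clSize G x

/-- The prime graph on real class sizes is disconnected. -/
def realDisconnected (G : Type*) [Group G] : Prop :=
  ∃ π₁ π₂ : Set ℕ, π₁.Nonempty ∧ π₂.Nonempty ∧ Disjoint π₁ π₂ ∧
    π₁ ∪ π₂ = realVerts G ∧ ∀ p ∈ π₁, ∀ q ∈ π₂, ¬ realAdj G p q

/-!
Real elements of `G` lie in the normal Sylow 2-subgroup `S`, since they are real in the odd-order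
quotient `G ⧸ S`, and they are real already in `S`, since an odd power of an inverting element lies
in `S`. Hence they are central in `S`: they are involutions, commute pairwise and have odd class
sizes.

If the graph splits, take real `x`, `y` whose class sizes `a`, `b` lie on opposite sides; they are
coprime, so `C(y)` is transitive on `x^G`. The involution `xy` is real, so its class size is
coprime to `a` or to `b`, say to `b`, and then `C(xy)` is transitive on `y^G`. Together this gives
`x^G * (y * y'⁻¹) = x^G` for any `y' ≠ y` in `y^G`, so multiplication by the involution `y * y'⁻¹`
is a fixed-point-free involution of `x^G`, contradicting that `a` is odd.
-/

open MulAction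

theorem Subgroup.index_inf_of_coprime {G : Type*} [Group G] {H K : Subgroup G}
    (h : H.index.Coprime K.index) : (H ⊓ K).index = H.index * K.index := by
  rcases eq_or_ne (H ⊓ K).index 0 with h0 | h0
  · obtain hH | hK : H.index = 0 ∨ K.index = 0 := by
      by_contra! hne
      exact Subgroup.index_inf_ne_zero hne.1 hne.2 h0
    all_goals simp [*]
  · refine le_antisymm Subgroup.index_inf_le (Nat.le_of_dvd (Nat.pos_of_ne_zero h0) ?_)
    exact h.mul_dvd_of_dvd_of_dvd (Subgroup.index_dvd_of_le inf_le_left)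
      (Subgroup.index_dvd_of_le inf_le_right)

theorem Nat.coprime_of_primeFactors_subset {m n : ℕ} {π₁ π₂ : Set ℕ} (hdisj : Disjoint π₁ π₂)
    (hm0 : m ≠ 0) (hn0 : n ≠ 0) (hm : ↑m.primeFactors ⊆ π₁) (hn : ↑n.primeFactors ⊆ π₂) :
    m.Coprime n :=
  (Nat.disjoint_primeFactors hm0 hn0).mp (Finset.disjoint_coe.mp (hdisj.mono hm hn))

theorem even_card_of_involutive {α : Type*} [Finite α] {f : α → α}
    (hf : Function.Involutive f) (hfix : ∀ a, f a ≠ a) : Even (Nat.card α) := by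
  classical
  cases nonempty_fintype α
  have h := Equiv.Perm.two_dvd_card_support (σ := hf.toPerm f) (by ext a; simp [sq, hf a])
  rwa [show (hf.toPerm f).support = Finset.univ by ext a; simp [hfix a], Finset.card_univ,
    ← Nat.card_eq_fintype_card, ← even_iff_two_dvd] at h

section ClassSize

variable {G : Type*} [Group G]

theorem clSize_eq_index_stabilizer (x : G) : clSize G x = (stabilizer (ConjAct G) x).index := by
  rw [index_stabilizer, ← Nat.card_coe_set_eq, clSize]
  refine Nat.card_congr (Equiv.subtypeEquivRight fun y => ?_)
  rw [ConjAct.orbit_eq_carrier_conjClasses, ConjClasses.mem_carrier_iff_mk_eq,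
    ConjClasses.mk_eq_mk_iff_isConj, isConj_comm]

theorem clSize_eq_index_centralizer (x : G) : clSize G x = (Subgroup.centralizer {x}).index := by
  rw [clSize_eq_index_stabilizer, Subgroup.centralizer_eq_comap_stabilizer]
  exact (Subgroup.index_comap_of_surjective _ ConjAct.toConjAct.surjective).symm

theorem clSize_pos [Finite G] (x : G) : 0 < clSize G x :=
  have : Nonempty {y : G // IsConj x y} := ⟨⟨x, IsConj.refl x⟩⟩
  Nat.card_pos

theorem one_lt_clSize_of_prime_dvd [Finite G] {x : G} {p : ℕ} (hp : p.Prime)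
    (h : p ∣ clSize G x) : 1 < clSize G x :=
  hp.one_lt.trans_le (Nat.le_of_dvd (clSize_pos x) h)

theorem exists_commute_conj_eq_of_coprime [Finite G] {x y y' : G}
    (h : (clSize G x).Coprime (clSize G y)) (hy : IsConj y y') :
    ∃ g : G, Commute g x ∧ g * y * g⁻¹ = y' := by
  have hstab : stabilizer (ConjAct G) (x, y) =
      stabilizer (ConjAct G) x ⊓ stabilizer (ConjAct G) y := by
    ext g; simp [Prod.ext_iff]
  have horbit : orbit (ConjAct G) (x, y) = orbit (ConjAct G) x ×ˢ orbit (ConjAct G) y := by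
    refine Set.eq_of_subset_of_ncard_le ?_ ?_ (Set.toFinite _)
    · rintro _ ⟨g, rfl⟩
      exact ⟨⟨g, rfl⟩, ⟨g, rfl⟩⟩
    · rw [clSize_eq_index_stabilizer, clSize_eq_index_stabilizer] at h
      rw [Set.ncard_prod, ← index_stabilizer, ← index_stabilizer, ← index_stabilizer, hstab,
        Subgroup.index_inf_of_coprime h]
  obtain ⟨c, hc⟩ := isConj_iff.mp hy
  obtain ⟨g, hg⟩ : (x, y') ∈ orbit (ConjAct G) (x, y) :=
    horbit ▸ ⟨mem_orbit_self x, ⟨ConjAct.toConjAct c, by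
      show ConjAct.toConjAct c • y = y'; rwa [ConjAct.toConjAct_smul]⟩⟩
  simp only [Prod.smul_mk, Prod.ext_iff, ConjAct.smul_def] at hg
  exact ⟨ConjAct.ofConjAct g, mul_inv_eq_iff_eq_mul.mp hg.1, hg.2⟩

theorem even_clSize_of_mul_right_mem {x w : G} [Finite G] (hw : w * w = 1) (hw1 : w ≠ 1)
    (h : ∀ x', IsConj x x' → IsConj x (x' * w)) : Even (clSize G x) := by
  refine even_card_of_involutive (f := fun x' => ⟨x' * w, h x' x'.2⟩) ?_ ?_
  · intro x'
    simp [mul_assoc, hw]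
  · intro x' hx'
    exact hw1 (mul_eq_left.mp (congrArg Subtype.val hx'))

-- Write `x' = h x h⁻¹` with `h ∈ C(y)`, then move `h⁻¹ y' h` back to `y` inside `C(xy)`.
theorem isConj_mul_mul_inv_of_coprime [Finite G] {x y x' y' : G}
    (hxy : (clSize G x).Coprime (clSize G y)) (hxyy : (clSize G (x * y)).Coprime (clSize G y))
    (hx' : IsConj x x') (hy' : IsConj y y') : IsConj x (x' * (y * y'⁻¹)) := by
  obtain ⟨h, hhy, rfl⟩ := exists_commute_conj_eq_of_coprime hxy.symm hx'
  obtain ⟨g, hgz, hg⟩ := exists_commute_conj_eq_of_coprime hxyy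
    (hy'.trans (isConj_iff.mpr ⟨h⁻¹, rfl⟩))
  have hgx : g * x * g⁻¹ = x * y * (h⁻¹ * y' * h⁻¹⁻¹)⁻¹ := by
    rw [← hg]
    calc g * x * g⁻¹ = g * (x * y) * g⁻¹ * (g * y * g⁻¹)⁻¹ := by group
      _ = x * y * (g * y * g⁻¹)⁻¹ := by rw [hgz.eq, mul_inv_cancel_right]
  refine isConj_iff.mpr ⟨h * g, ?_⟩
  calc h * g * x * (h * g)⁻¹ = h * (g * x * g⁻¹) * h⁻¹ := by group
    _ = h * x * (y * h⁻¹) * y'⁻¹ := by rw [hgx]; group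
    _ = h * x * h⁻¹ * (y * y'⁻¹) := by rw [← hhy.inv_left.eq]; group

theorem even_clSize_of_coprime [Finite G] {x y : G} (hy : y * y = 1)
    (hcomm : ∀ y', IsConj y y' → Commute y y') (hy1 : 1 < clSize G y)
    (hxy : (clSize G x).Coprime (clSize G y)) (hxyy : (clSize G (x * y)).Coprime (clSize G y)) :
    Even (clSize G x) := by
  have : Nontrivial {y' : G // IsConj y y'} := Finite.one_lt_card_iff_nontrivial.mp hy1
  obtain ⟨⟨y', hyy'⟩, hne⟩ := exists_ne (⟨y, IsConj.refl y⟩ : {y' : G // IsConj y y'})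
  have hy'y : y' ≠ y := fun h => hne (Subtype.ext h)
  have hy' : y' * y' = 1 := by
    obtain ⟨c, rfl⟩ := isConj_iff.mp hyy'
    simp [mul_assoc, ← mul_assoc y, hy]
  refine even_clSize_of_mul_right_mem (w := y * y'⁻¹) ?_ (fun h => hy'y (mul_inv_eq_one.mp h).symm)
    fun x' hx' => isConj_mul_mul_inv_of_coprime hxy hxyy hx' hyy'
  calc y * y'⁻¹ * (y * y'⁻¹) = y * (y'⁻¹ * y) * y'⁻¹ := by group
    _ = (y * y) * (y' * y')⁻¹ := by rw [← (hcomm y' hyy').inv_right.eq]; group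
    _ = 1 := by rw [hy, hy', inv_one, one_mul]

end ClassSize

section RealElements

variable {G : Type*} [Group G]

theorem isRealEl_of_mul_self_eq_one {x : G} (h : x * x = 1) : IsRealEl G x :=
  ⟨1, by simp [inv_eq_of_mul_eq_one_right h]⟩

theorem IsRealEl.map {H : Type*} [Group H] (f : G →* H) {x : G} (hx : IsRealEl G x) :
    IsRealEl H (f x) := by
  obtain ⟨g, hg⟩ := hx
  exact ⟨f g, by simpa using congrArg f hg⟩

theorem IsRealEl.of_isConj {x y : G} (hx : IsRealEl G x) (hxy : IsConj x y) : IsRealEl G y := by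
  obtain ⟨c, rfl⟩ := isConj_iff.mp hxy
  exact hx.map (MulAut.conj c).toMonoidHom

theorem IsRealEl.inv_eq_of_mem_center {x : G} (hx : IsRealEl G x) (hc : x ∈ Subgroup.center G) :
    x⁻¹ = x := by
  obtain ⟨g, hg⟩ := hx
  rw [← hg, Subgroup.mem_center_iff.mp hc g⁻¹, inv_mul_cancel_right]

theorem conj_pow_eq_inv_of_odd {x g : G} (hg : g⁻¹ * x * g = x⁻¹) {n : ℕ} (hn : Odd n) :
    (g ^ n)⁻¹ * x * g ^ n = x⁻¹ := by
  have hsq : Commute (g * g) x := by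
    have h : (g * g)⁻¹ * x * (g * g) = x := by
      calc (g * g)⁻¹ * x * (g * g) = g⁻¹ * (g⁻¹ * x * g) * g := by group
        _ = g⁻¹ * x⁻¹ * g := by rw [hg]
        _ = (g⁻¹ * x * g)⁻¹ := by group
        _ = x := by rw [hg, inv_inv]
    calc g * g * x = g * g * ((g * g)⁻¹ * x * (g * g)) := by rw [h]
      _ = x * (g * g) := by group
  obtain ⟨k, rfl⟩ := hn
  rw [pow_succ, pow_mul, sq, mul_inv_rev]
  calc g⁻¹ * ((g * g) ^ k)⁻¹ * x * ((g * g) ^ k * g)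
      = g⁻¹ * (((g * g) ^ k)⁻¹ * ((g * g) ^ k * x)) * g := by rw [(hsq.pow_left k).eq]; group
    _ = x⁻¹ := by rw [inv_mul_cancel_left, hg]

theorem IsRealEl.eq_one_of_odd_card (hG : Odd (Nat.card G)) {x : G} (hx : IsRealEl G x) :
    x = 1 := by
  obtain ⟨g, hg⟩ := hx
  have hinv : x⁻¹ = x := by
    simpa [pow_orderOf_eq_one] using
      (conj_pow_eq_inv_of_odd hg (hG.of_dvd_nat (orderOf_dvd_natCard g))).symm
  have h2 : orderOf x ∣ 2 := orderOf_dvd_of_pow_eq_one (by rw [sq, ← inv_mul_cancel x, hinv])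
  exact orderOf_eq_one_iff.mp (Nat.Coprime.eq_one_of_dvd
    ((Nat.coprime_two_right.mpr (hG.of_dvd_nat (orderOf_dvd_natCard x)))) h2)

theorem IsRealEl.mem_of_odd_index {N : Subgroup G} [N.Normal] (hN : Odd N.index) {x : G}
    (hx : IsRealEl G x) : x ∈ N := by
  rw [← QuotientGroup.eq_one_iff]
  exact (hx.map (QuotientGroup.mk' N)).eq_one_of_odd_card (by rwa [← Subgroup.index_eq_card])

theorem IsRealEl.subgroup_of_odd_index {N : Subgroup G} [N.Normal] (hN : Odd N.index) {x : G}
    (hx : IsRealEl G x) : IsRealEl N ⟨x, hx.mem_of_odd_index hN⟩ := by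
  obtain ⟨g, hg⟩ := hx
  set m := orderOf (g : G ⧸ N)
  have hm : Odd m := hN.of_dvd_nat (Subgroup.index_eq_card N ▸ orderOf_dvd_natCard _)
  have hgm : g ^ m ∈ N := by
    rw [← QuotientGroup.eq_one_iff, QuotientGroup.mk_pow, pow_orderOf_eq_one]
  exact ⟨⟨g ^ m, hgm⟩, Subtype.ext (by simpa using conj_pow_eq_inv_of_odd hg hm)⟩

end RealElements

def RealElementsCentral (H : Type*) [Group H] : Prop :=
  ∀ x : H, IsRealEl H x → x ∈ Subgroup.center H

section NormalSylowTwo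

variable {G : Type*} [Group G] [Finite G]

theorem Sylow.odd_index_two (S : Sylow 2 G) : Odd (S : Subgroup G).index :=
  have : Fact (Nat.Prime 2) := ⟨Nat.prime_two⟩
  Nat.odd_iff.mpr (Nat.two_dvd_ne_zero.mp S.not_dvd_index)

variable (S : Sylow 2 G) [(S : Subgroup G).Normal]

theorem IsRealEl.mul_self_eq_one_of_sylow (hS : RealElementsCentral S) {x : G}
    (hx : IsRealEl G x) : x * x = 1 := by
  have hxS := hx.subgroup_of_odd_index S.odd_index_two
  exact mul_eq_one_iff_eq_inv.mpr (congrArg Subtype.val (hxS.inv_eq_of_mem_center (hS _ hxS))).symm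

theorem IsRealEl.sylow_le_centralizer (hS : RealElementsCentral S) {x : G}
    (hx : IsRealEl G x) : (S : Subgroup G) ≤ Subgroup.centralizer {x} := by
  intro s hs
  have := Subgroup.mem_center_iff.mp (hS _ (hx.subgroup_of_odd_index S.odd_index_two)) ⟨s, hs⟩
  exact Subgroup.mem_centralizer_singleton_iff.mpr (congrArg Subtype.val this)

theorem IsRealEl.commute_of_sylow (hS : RealElementsCentral S) {x y : G}
    (hx : IsRealEl G x) (hy : IsRealEl G y) : Commute x y :=
  (Subgroup.mem_centralizer_singleton_iff.mp
    (hx.sylow_le_centralizer S hS (hy.mem_of_odd_index S.odd_index_two))).symm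

theorem IsRealEl.odd_clSize_of_sylow (hS : RealElementsCentral S) {x : G} (hx : IsRealEl G x) :
    Odd (clSize G x) := by
  rw [clSize_eq_index_centralizer]
  exact S.odd_index_two.of_dvd_nat (Subgroup.index_dvd_of_le (hx.sylow_le_centralizer S hS))

end NormalSylowTwo

section PrimeGraph

variable {G : Type*} [Group G]

theorem primeFactors_clSize_subset_or {π₁ π₂ : Set ℕ} (huni : π₁ ∪ π₂ = realVerts G)
    (hnoadj : ∀ p ∈ π₁, ∀ q ∈ π₂, ¬ realAdj G p q) {u : G} (hu : IsRealEl G u) :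
    ↑(clSize G u).primeFactors ⊆ π₁ ∨ ↑(clSize G u).primeFactors ⊆ π₂ := by
  by_contra! h
  obtain ⟨r, hr, hr₁⟩ := Set.not_subset.mp h.1
  obtain ⟨s, hs, hs₂⟩ := Set.not_subset.mp h.2
  have hvert : ∀ t ∈ (clSize G u).primeFactors, t ∈ π₁ ∪ π₂ := fun t ht =>
    huni ▸ ⟨Nat.prime_of_mem_primeFactors ht, u, hu, Nat.dvd_of_mem_primeFactors ht⟩
  have hs₁ : s ∈ π₁ := (hvert s hs).resolve_right hs₂
  have hsr : s ≠ r := fun h => hr₁ (h ▸ hs₁)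
  refine hnoadj s hs₁ r ((hvert r hr).resolve_left hr₁)
    ⟨Nat.prime_of_mem_primeFactors hs, Nat.prime_of_mem_primeFactors hr, hsr, u, hu, ?_⟩
  exact ((Nat.coprime_primes (Nat.prime_of_mem_primeFactors hs)
    (Nat.prime_of_mem_primeFactors hr)).mpr hsr).mul_dvd_of_dvd_of_dvd
    (Nat.dvd_of_mem_primeFactors hs) (Nat.dvd_of_mem_primeFactors hr)

end PrimeGraph

theorem stmt_18 {G : Type*} [Group G] [Finite G] (S : Sylow 2 G)
    (hnorm : (S : Subgroup G).Normal)
    (hreal : ∀ x : (S : Subgroup G), IsRealEl (S : Subgroup G) x →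
      x ∈ Subgroup.center (S : Subgroup G)) :
    ¬ realDisconnected G := by
  rintro ⟨π₁, π₂, ⟨p, hp⟩, ⟨q, hq⟩, hdisj, huni, hnoadj⟩
  obtain ⟨hp', x, hx, hpx⟩ : p ∈ realVerts G := huni ▸ Or.inl hp
  obtain ⟨hq', y, hy, hqy⟩ : q ∈ realVerts G := huni ▸ Or.inr hq
  have side := fun u (hu : IsRealEl G u) => primeFactors_clSize_subset_or huni hnoadj hu
  have hx₁ : ↑(clSize G x).primeFactors ⊆ π₁ := (side x hx).resolve_right fun h =>
    hdisj.ne_of_mem hp (h (Nat.mem_primeFactors.mpr ⟨hp', hpx, (clSize_pos x).ne'⟩)) rfl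
  have hy₂ : ↑(clSize G y).primeFactors ⊆ π₂ := (side y hy).resolve_left fun h =>
    hdisj.ne_of_mem (h (Nat.mem_primeFactors.mpr ⟨hq', hqy, (clSize_pos y).ne'⟩)) hq rfl
  have hcop {u v : G} :=
    Nat.coprime_of_primeFactors_subset hdisj (clSize_pos u).ne' (clSize_pos v).ne'
  have hcomm {u : G} (hu : IsRealEl G u) (u' : G) (h : IsConj u u') : Commute u u' :=
    hu.commute_of_sylow S hreal (hu.of_isConj h)
  have hyx : Commute y x := hy.commute_of_sylow S hreal hx
  have hz : IsRealEl G (x * y) := isRealEl_of_mul_self_eq_one (by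
    rw [hyx.mul_mul_mul_comm, hx.mul_self_eq_one_of_sylow S hreal,
      hy.mul_self_eq_one_of_sylow S hreal, one_mul])
  rcases side (x * y) hz with hz₁ | hz₂
  · exact Nat.not_even_iff_odd.mpr (hx.odd_clSize_of_sylow S hreal) <|
      even_clSize_of_coprime (hy.mul_self_eq_one_of_sylow S hreal) (hcomm hy)
        (one_lt_clSize_of_prime_dvd hq' hqy) (hcop hx₁ hy₂) (hcop hz₁ hy₂)
  · rw [← hyx.eq] at hz₂
    exact Nat.not_even_iff_odd.mpr (hy.odd_clSize_of_sylow S hreal) <|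
      even_clSize_of_coprime (hx.mul_self_eq_one_of_sylow S hreal) (hcomm hx)
        (one_lt_clSize_of_prime_dvd hp' hpx) (hcop hx₁ hy₂).symm
        (hcop hx₁ hz₂).symm
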